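/- Let (S, μ, η) be a monad on C equipped with a differential combinator transformation ∂, and define λ_A := ⟨S(π₁), S(π₁+π₄)∘∂_{A×A}⟩ : S(A×A) → S(A)×S(A). Then λ is compatible with the vertical lift of the biproduct tangent structure: ⟨π₁,0,0,π₂⟩∘λ_A = (λ_A × λ_A)∘λ_{A×A}∘S(⟨π₁,0,0,π₂⟩) as morphisms S(A×A) → (S(A)×S(A))×(S(A)×S(A)), where ⟨π₁,0,0,π₂⟩ : X×X → (X×X)×(X×X) places the first coordinate in position 1 and the second coordinate in position 4. -/

import Mathlib

/-!
The vertical lift is `ι₁ × ι₂`, so both sides split into two coordinates. In the first,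
`S(ι₁) ≫ λ = ι₁`: the derivative part of `λ` dies by DC.1. In the second,
`∂ ≫ S(π₁ × π₂) ≫ λ = λ ≫ π₂ ≫ ι₂`: its first half dies by DC.1 again, and its second half
is DC.5 after naturality of `∂` moves `S(π₁ × π₂)` past the second derivative.
-/

open CategoryTheory CategoryTheory.Limits

universe v u

variable {C : Type u} [Category.{v} C] [Preadditive C] [HasBinaryBiproducts C]

/-- A differential combinator transformation on a monad `S`. -/
structure DiffCombTrans (S : Monad C) where
  d : ∀ A : C, S.obj A ⟶ S.obj (A ⊞ A)
  natural : ∀ {A B : C} (f : A ⟶ B), S.map f ≫ d B = d A ≫ S.map (biprod.map f f)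
  dc1 : ∀ A : C, d A ≫ S.map biprod.fst = 0
  dc2 : ∀ A : C,
    d A ≫ S.map (biprod.lift biprod.fst (biprod.lift biprod.snd biprod.snd)) =
      d A ≫ S.map (biprod.lift biprod.fst (biprod.lift biprod.snd 0)) +
      d A ≫ S.map (biprod.lift biprod.fst (biprod.lift 0 biprod.snd))
  dc3 : ∀ A : C, S.η.app A ≫ d A = biprod.lift 0 (𝟙 A) ≫ S.η.app (A ⊞ A)
  dc4 : ∀ A : C, S.μ.app A ≫ d A =
    d (S.obj A) ≫
      S.map (biprod.fst ≫ S.map (biprod.lift (𝟙 A) 0) + biprod.snd ≫ d A) ≫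
      S.μ.app (A ⊞ A)
  dc5 : ∀ A : C, d A ≫ d (A ⊞ A) ≫
      S.map (biprod.lift (biprod.fst ≫ biprod.fst) (biprod.snd ≫ biprod.snd)) = d A
  dc6 : ∀ A : C, d A ≫ d (A ⊞ A) ≫
      S.map (biprod.lift
        (biprod.lift (biprod.fst ≫ biprod.fst) (biprod.snd ≫ biprod.fst))
        (biprod.lift (biprod.fst ≫ biprod.snd) (biprod.snd ≫ biprod.snd))) =
      d A ≫ d (A ⊞ A)

/-- `λ_A := ⟨S(π₁), S(π₁+π₄) ∘ ∂_{A×A}⟩ : S(A×A) ⟶ S(A) × S(A)`. -/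
noncomputable def lamOf (S : Monad C) (p : DiffCombTrans S) (A : C) :
    S.obj (A ⊞ A) ⟶ S.obj A ⊞ S.obj A :=
  biprod.lift (S.map biprod.fst)
    (p.d (A ⊞ A) ≫ S.map (biprod.fst ≫ biprod.fst + biprod.snd ≫ biprod.snd))

/-- the vertical lift `⟨π₁,0,0,π₂⟩ : X × X ⟶ (X × X) × (X × X)`. -/
noncomputable def vertLift (X : C) : X ⊞ X ⟶ (X ⊞ X) ⊞ (X ⊞ X) :=
  biprod.lift (biprod.lift biprod.fst 0) (biprod.lift 0 biprod.snd)

namespace DiffCombTrans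

variable {S : Monad C} (p : DiffCombTrans S)

theorem natural_assoc {A B Y : C} (f : A ⟶ B) (g : B ⊞ B ⟶ Y) :
    S.map f ≫ p.d B ≫ S.map g = p.d A ≫ S.map (biprod.map f f ≫ g) := by
  rw [reassoc_of% p.natural f, Functor.map_comp]

theorem d_map_fst_comp {X Y : C} (f : X ⟶ Y) : p.d X ≫ S.map (biprod.fst ≫ f) = 0 := by
  rw [Functor.map_comp, reassoc_of% p.dc1, zero_comp]

theorem d_d_map_fst_snd (X : C) :
    p.d X ≫ p.d (X ⊞ X) ≫ S.map (biprod.map biprod.fst biprod.snd) = p.d X := by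
  convert p.dc5 X using 4
  ext <;> simp

end DiffCombTrans

section Lambda

variable {S : Monad C} (p : DiffCombTrans S)

theorem lamOf_fst (A : C) : lamOf S p A ≫ biprod.fst = S.map biprod.fst :=
  biprod.lift_fst _ _

theorem lamOf_snd (A : C) :
    lamOf S p A ≫ biprod.snd =
      p.d (A ⊞ A) ≫ S.map (biprod.fst ≫ biprod.fst + biprod.snd ≫ biprod.snd) :=
  biprod.lift_snd _ _

theorem map_comp_lamOf_fst {X A : C} (f : X ⟶ A ⊞ A) :
    S.map f ≫ lamOf S p A ≫ biprod.fst = S.map (f ≫ biprod.fst) := by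
  rw [lamOf_fst, Functor.map_comp]

theorem map_comp_lamOf_snd {X A : C} (f : X ⟶ A ⊞ A) :
    S.map f ≫ lamOf S p A ≫ biprod.snd =
      p.d X ≫ S.map (biprod.fst ≫ f ≫ biprod.fst + biprod.snd ≫ f ≫ biprod.snd) := by
  rw [lamOf_snd, p.natural_assoc]
  simp [Preadditive.comp_add]

theorem map_inl_comp_lamOf (A : C) : S.map biprod.inl ≫ lamOf S p A = biprod.inl := by
  apply biprod.hom_ext
  · simp [map_comp_lamOf_fst]
  · simp [map_comp_lamOf_snd, p.dc1]

theorem vertLift_eq_map (X : C) : vertLift X = biprod.map biprod.inl biprod.inr := by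
  ext <;> simp [vertLift]

theorem map_vertLift_comp_lamOf (A : C) :
    S.map (vertLift A) ≫ lamOf S p (A ⊞ A) =
      biprod.lift (S.map (biprod.fst ≫ biprod.inl))
        (p.d (A ⊞ A) ≫ S.map (biprod.map biprod.fst biprod.snd)) := by
  apply biprod.hom_ext
  · simp [map_comp_lamOf_fst, vertLift_eq_map]
  · rw [Category.assoc, map_comp_lamOf_snd, biprod.lift_snd]
    congr 2
    ext <;> simp [vertLift_eq_map, Preadditive.comp_add]

theorem d_map_fst_snd_comp_lamOf (A : C) :
    p.d (A ⊞ A) ≫ S.map (biprod.map biprod.fst biprod.snd) ≫ lamOf S p A =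
      lamOf S p A ≫ biprod.snd ≫ biprod.inr := by
  apply biprod.hom_ext
  · rw [Category.assoc, Category.assoc, map_comp_lamOf_fst, biprod.map_fst, p.d_map_fst_comp]
    simp
  · have : (biprod.fst ≫ biprod.map biprod.fst biprod.snd ≫ biprod.fst +
          biprod.snd ≫ biprod.map biprod.fst biprod.snd ≫ biprod.snd :
            ((A ⊞ A) ⊞ (A ⊞ A)) ⊞ ((A ⊞ A) ⊞ (A ⊞ A)) ⟶ A) =
        biprod.map biprod.fst biprod.snd ≫
          (biprod.fst ≫ biprod.fst + biprod.snd ≫ (biprod.snd : A ⊞ A ⟶ A)) := by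
      simp [Preadditive.comp_add]
    rw [Category.assoc, Category.assoc, map_comp_lamOf_snd, this, Functor.map_comp,
      reassoc_of% p.d_d_map_fst_snd, Category.assoc, Category.assoc, biprod.inr_snd,
      Category.comp_id, lamOf_snd]

end Lambda

/-- `λ` is compatible with the vertical lift of the biproduct tangent structure:
`⟨π₁,0,0,π₂⟩ ∘ λ_A = (λ_A × λ_A) ∘ λ_{A×A} ∘ S(⟨π₁,0,0,π₂⟩)`. -/
theorem lamOf_vertLift (S : Monad C) (p : DiffCombTrans S) (A : C) :
    lamOf S p A ≫ vertLift (S.obj A) =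
      S.map (vertLift A) ≫ lamOf S p (A ⊞ A) ≫
        biprod.map (lamOf S p A) (lamOf S p A) := by
  rw [reassoc_of% map_vertLift_comp_lamOf, vertLift_eq_map]
  apply biprod.hom_ext
  · simp only [Category.assoc, biprod.map_fst, biprod.lift_fst_assoc, Functor.map_comp,
      map_inl_comp_lamOf, reassoc_of% lamOf_fst]
  · simp [d_map_fst_snd_comp_lamOf]
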